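/- arXiv:2005.04446 — 3 statements merged into one kernel-verified Lean document; each statement's English description precedes it below -/
import Mathlib

section
/- Let a,b>0, τ≥0, c>0, and let φ̂:ℝ→ℝ be continuous with 0 ≤ φ̂(t) ≤ a/b for all t, φ̂ not identically 0 and not identically a/b, and φ̂(t)→a/b as t→+∞. Then the Bessel potential η = B[φ̂] satisfies 0 < η(t) < a/b and |η'(t)| ≤ a/(2b) for all t∈ℝ, and η(t)→a/b, η'(t)→0 as t→+∞. -/
open MeasureTheory Filter Topology Set

/-- The Bessel potential `B[φ]`, the unique bounded solution of `-η'' + τcη' + η = φ`. -/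
noncomputable def besselB (τ c : ℝ) (φ : ℝ → ℝ) (ξ : ℝ) : ℝ :=
  ∫ s in Set.Ioi (0:ℝ), ∫ z : ℝ,
    (Real.exp (-s) / Real.sqrt (4 * Real.pi * s)) *
      Real.exp (-(ξ - z)^2 / (4 * s)) * φ (z - τ * c * s)

/-!
With the heat kernel `G_s`, `B[φ](ξ) = ∫₀^∞ e^{-s} (G_s ∗ φ)(ξ - τcs) ds`, so every estimate
reduces to one for the heat flow `G_s ∗ φ`. Since `G_s > 0` has mass one, `G_s ∗ φ` lies strictly
between `0` and `a/b` unless `φ` is identically `0` or `a/b`, and it tends to `lim_{+∞} φ` by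
dominated convergence. Its derivative is `G_s' ∗ φ`; as `∫ G_s' = 0`, `φ` may be replaced by
`φ - a/(2b)`, which is bounded by `a/(2b)`, whence
`|(G_s ∗ φ)'| ≤ (a/(2b)) ∫ |G_s'| = (a/(2b)) / √(πs)`.
Finally `∫₀^∞ e^{-s} / √(πs) ds = Γ(1/2) / √π = 1`.
-/

open Real

theorem abs_le_abs_add_of_abs_sub_le {a b r : ℝ} (h : |a - b| ≤ r) : |a| ≤ |b| + r := by
  linarith [abs_sub_abs_le_abs_sub a b]

theorem Function.Odd.integral_eq_zero {E : Type*} [NormedAddCommGroup E] [NormedSpace ℝ E]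
    {f : ℝ → E} (hf : Function.Odd f) : ∫ x, f x = 0 := by
  have h := integral_neg_eq_self f volume
  simp only [hf _, integral_neg] at h
  have h2 : (2:ℝ) • ∫ x, f x = 0 := by rw [two_smul]; nth_rw 1 [← h]; exact neg_add_cancel _
  exact (smul_eq_zero.1 h2).resolve_left two_ne_zero

theorem integral_Ioi_mul_exp_neg_mul_sq {b : ℝ} (hb : 0 < b) :
    ∫ x in Ioi (0:ℝ), x * exp (-b * x ^ 2) = (2 * b)⁻¹ := by
  have := integral_rpow_mul_exp_neg_mul_rpow (p := 2) (q := 1) two_pos (by norm_num) hb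
  norm_num [Real.rpow_two, Real.rpow_neg_one] at this
  simp only [neg_mul, this]
  ring

theorem integral_abs_mul_exp_neg_mul_sq {b : ℝ} (hb : 0 < b) :
    ∫ x, |x| * exp (-b * x ^ 2) = b⁻¹ := by
  have := integral_comp_abs (f := fun x => x * exp (-b * x ^ 2))
  simp only [sq_abs] at this
  rw [this, integral_Ioi_mul_exp_neg_mul_sq hb]
  field_simp

theorem integrable_abs_add_one_mul_exp_neg_mul_sq {b : ℝ} (hb : 0 < b) :
    Integrable fun x : ℝ => (|x| + 1) * exp (-b * x ^ 2) := by
  simp only [add_mul, one_mul]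
  refine Integrable.add ?_ (integrable_exp_neg_mul_sq hb)
  simpa only [abs_mul, abs_of_pos (exp_pos _)] using (integrable_mul_exp_neg_mul_sq hb).abs

theorem exp_neg_div_sqrt_pi_mul_eq {s : ℝ} (hs : 0 < s) :
    exp (-s) / √(π * s) = (√π)⁻¹ * (exp (-s) * s ^ ((1:ℝ) / 2 - 1)) := by
  rw [show (1:ℝ) / 2 - 1 = -(1 / 2) by norm_num, Real.rpow_neg hs.le, ← Real.sqrt_eq_rpow,
    Real.sqrt_mul pi_pos.le]
  ring

theorem integrableOn_exp_neg_div_sqrt_pi_mul :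
    IntegrableOn (fun s => exp (-s) / √(π * s)) (Ioi 0) :=
  IntegrableOn.congr_fun ((Real.GammaIntegral_convergent one_half_pos).const_mul _)
    (fun _ hs => (exp_neg_div_sqrt_pi_mul_eq hs).symm) measurableSet_Ioi

theorem integral_exp_neg_div_sqrt_pi_mul :
    ∫ s in Ioi (0:ℝ), exp (-s) / √(π * s) = 1 := by
  rw [setIntegral_congr_fun measurableSet_Ioi fun _ hs => exp_neg_div_sqrt_pi_mul_eq hs,
    integral_const_mul, ← Real.Gamma_eq_integral one_half_pos, Real.Gamma_one_half_eq]
  exact inv_mul_cancel₀ (sqrt_pos.2 pi_pos).ne'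

section KernelConvolution

variable {k φ : ℝ → ℝ} {c r M : ℝ}

theorem integrable_comp_sub_mul (hk : Integrable k) (hφ : Measurable φ) (hbd : ∀ z, |φ z| ≤ M)
    (x : ℝ) : Integrable fun z => k (x - z) * φ z :=
  (hk.comp_sub_left x).mul_bdd hφ.aestronglyMeasurable (ae_of_all _ hbd)

theorem integral_comp_sub_mul_sub_const (hk : Integrable k) (hφ : Measurable φ)
    (hbd : ∀ z, |φ z| ≤ M) (c x : ℝ) :
    ∫ z, k (x - z) * (φ z - c) = (∫ z, k (x - z) * φ z) - (∫ z, k z) * c := by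
  simp only [mul_sub]
  rw [integral_sub (integrable_comp_sub_mul hk hφ hbd x) ((hk.comp_sub_left x).mul_const c),
    integral_mul_const, integral_sub_left_eq_self k volume x]

theorem abs_integral_comp_sub_mul_sub_le (hk : Integrable k) (hφ : Measurable φ)
    (hosc : ∀ z, |φ z - c| ≤ r) (x : ℝ) :
    |(∫ z, k (x - z) * φ z) - (∫ z, k z) * c| ≤ r * ∫ z, |k z| := by
  have hbd : ∀ z, |φ z| ≤ |c| + r := fun z => abs_le_abs_add_of_abs_sub_le (hosc z)
  rw [← integral_comp_sub_mul_sub_const hk hφ hbd, ← integral_const_mul r,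
    ← integral_sub_left_eq_self (fun z => r * |k z|) volume x]
  refine norm_integral_le_of_norm_le (f := fun z => k (x - z) * (φ z - c))
    ((hk.comp_sub_left x).abs.const_mul r)
    (ae_of_all _ fun z => ?_)
  rw [Real.norm_eq_abs, abs_mul, mul_comm]
  exact mul_le_mul_of_nonneg_right (hosc z) (abs_nonneg _)

theorem integral_comp_sub_mul_pos (hk : Continuous k) (hk_int : Integrable k)
    (hk_pos : ∀ y, 0 < k y) (hφ : Continuous φ) (h0 : ∀ z, 0 ≤ φ z) (hbd : ∀ z, |φ z| ≤ M)
    {z₀ : ℝ} (hz₀ : φ z₀ ≠ 0) (x : ℝ) : 0 < ∫ z, k (x - z) * φ z :=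
  integral_pos_of_integrable_nonneg_nonzero (by fun_prop)
    (integrable_comp_sub_mul hk_int hφ.measurable hbd x)
    (fun z => mul_nonneg (hk_pos _).le (h0 z)) (mul_ne_zero (hk_pos _).ne' hz₀)

theorem tendsto_integral_comp_sub_mul_atTop (hk : Integrable k) (hφ : Measurable φ)
    (hbd : ∀ z, |φ z| ≤ M) {L : ℝ} (hlim : Tendsto φ atTop (𝓝 L)) :
    Tendsto (fun x => ∫ z, k (x - z) * φ z) atTop (𝓝 ((∫ z, k z) * L)) := by
  have hsub : ∀ x, ∫ z, k (x - z) * φ z = ∫ y, k y * φ (x - y) := fun x => by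
    rw [← integral_sub_left_eq_self _ volume x]; simp only [sub_sub_cancel]
  simp only [hsub, ← integral_mul_const]
  refine tendsto_integral_filter_of_dominated_convergence (fun y => |k y| * M)
    (Eventually.of_forall fun x => hk.aestronglyMeasurable.mul
      (hφ.comp (measurable_const.sub measurable_id)).aestronglyMeasurable)
    (Eventually.of_forall fun x => ae_of_all _ fun y => ?_) (hk.abs.mul_const M)
    (ae_of_all _ fun y =>
      (hlim.comp (tendsto_atTop_add_const_right _ (-y) tendsto_id)).const_mul (k y))
  rw [Real.norm_eq_abs, abs_mul]
  exact mul_le_mul_of_nonneg_left (hbd _) (abs_nonneg _)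

theorem hasDerivAt_integral_comp_sub_mul {k' G : ℝ → ℝ} (hk : Integrable k)
    (hk' : ∀ y, HasDerivAt k (k' y) y) (hG : Integrable G)
    (hk'G : ∀ y t, |t| < 1 → |k' (y + t)| ≤ G y) (hφ : Measurable φ)
    (hbd : ∀ z, |φ z| ≤ M) (x₀ : ℝ) :
    HasDerivAt (fun x => ∫ z, k (x - z) * φ z) (∫ z, k' (x₀ - z) * φ z) x₀ := by
  have hk'_eq : k' = deriv k := funext fun y => (hk' y).deriv.symm
  refine (hasDerivAt_integral_of_dominated_loc_of_deriv_le (F' := fun x z => k' (x - z) * φ z)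
    (bound := fun z => G (x₀ - z) * M)
    (Metric.ball_mem_nhds x₀ one_pos)
    (Eventually.of_forall fun x => (integrable_comp_sub_mul hk hφ hbd x).aestronglyMeasurable)
    (integrable_comp_sub_mul hk hφ hbd x₀) ?_ ?_ ((hG.comp_sub_left x₀).mul_const M) ?_).2
  · rw [hk'_eq]
    exact ((measurable_deriv k).comp (measurable_const.sub measurable_id)).mul hφ
      |>.aestronglyMeasurable
  · refine ae_of_all _ fun z x hx => ?_
    have ht : |x - x₀| < 1 := by simpa [Real.dist_eq] using hx
    rw [Real.norm_eq_abs, abs_mul, show x - z = (x₀ - z) + (x - x₀) by ring]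
    exact mul_le_mul (hk'G _ _ ht) (hbd z) (abs_nonneg _) ((abs_nonneg _).trans (hk'G _ _ ht))
  · refine ae_of_all _ fun z x _ => ?_
    simpa using ((hk' (x - z)).comp x ((hasDerivAt_id x).sub_const z)).mul_const (φ z)

theorem stronglyMeasurable_integral_comp_sub_mul {K : ℝ → ℝ → ℝ}
    (hK : Measurable (Function.uncurry K)) {g : ℝ → ℝ} (hg : Measurable g)
    (hφ : Measurable φ) : StronglyMeasurable fun s => ∫ z, K s (g s - z) * φ z :=
  ((hK.comp (measurable_fst.prodMk ((hg.comp measurable_fst).sub measurable_snd))).mul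
    (hφ.comp measurable_snd)).stronglyMeasurable.integral_prod_right'

end KernelConvolution

noncomputable def heatKernel (s x : ℝ) : ℝ := exp (-x ^ 2 / (4 * s)) / √(4 * π * s)

noncomputable def heatKernelDeriv (s x : ℝ) : ℝ := -(x / (2 * s)) * heatKernel s x

noncomputable def heatFlow (s : ℝ) (φ : ℝ → ℝ) (x : ℝ) : ℝ := ∫ z, heatKernel s (x - z) * φ z

section HeatKernel

variable {s : ℝ}

theorem heatKernel_eq_inv_mul_exp (s x : ℝ) :
    heatKernel s x = (√(4 * π * s))⁻¹ * exp (-(4 * s)⁻¹ * x ^ 2) := by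
  rw [heatKernel, div_eq_inv_mul, neg_div, div_eq_inv_mul, neg_mul]

theorem heatKernel_pos (hs : 0 < s) (x : ℝ) : 0 < heatKernel s x := by
  unfold heatKernel; positivity

theorem measurable_heatKernel : Measurable (Function.uncurry heatKernel) := by
  unfold Function.uncurry heatKernel; fun_prop

theorem measurable_heatKernelDeriv : Measurable (Function.uncurry heatKernelDeriv) := by
  unfold Function.uncurry heatKernelDeriv heatKernel; fun_prop

theorem continuous_heatKernel (s : ℝ) : Continuous (heatKernel s) := by
  unfold heatKernel; fun_prop

theorem integrable_heatKernel (hs : 0 < s) : Integrable (heatKernel s) := by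
  simp only [funext (heatKernel_eq_inv_mul_exp s)]
  exact (integrable_exp_neg_mul_sq (by positivity)).const_mul _

theorem integral_heatKernel (hs : 0 < s) : ∫ x, heatKernel s x = 1 := by
  simp only [heatKernel_eq_inv_mul_exp, integral_const_mul, integral_gaussian, div_inv_eq_mul]
  rw [show π * (4 * s) = 4 * π * s by ring]
  exact inv_mul_cancel₀ (by positivity)

theorem hasDerivAt_heatKernel (s x : ℝ) :
    HasDerivAt (heatKernel s) (heatKernelDeriv s x) x := by
  have := (((hasDerivAt_pow 2 x).neg.div_const (4 * s)).exp).div_const (√(4 * π * s))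
  refine this.congr_deriv ?_
  simp only [heatKernelDeriv, heatKernel, Pi.neg_apply]
  ring

theorem integrable_heatKernelDeriv (hs : 0 < s) : Integrable (heatKernelDeriv s) := by
  have h : heatKernelDeriv s =
      fun x => (-(2 * s)⁻¹ * (√(4 * π * s))⁻¹) * (x * exp (-(4 * s)⁻¹ * x ^ 2)) := by
    ext x; rw [heatKernelDeriv, heatKernel_eq_inv_mul_exp]; ring
  rw [h]
  exact (integrable_mul_exp_neg_mul_sq (by positivity)).const_mul _

theorem integral_heatKernelDeriv (s : ℝ) : ∫ x, heatKernelDeriv s x = 0 :=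
  Function.Odd.integral_eq_zero fun x => by unfold heatKernelDeriv heatKernel; ring_nf

theorem abs_heatKernelDeriv (hs : 0 < s) (x : ℝ) :
    |heatKernelDeriv s x| =
      ((2 * s)⁻¹ * (√(4 * π * s))⁻¹) * (|x| * exp (-(4 * s)⁻¹ * x ^ 2)) := by
  rw [heatKernelDeriv, heatKernel_eq_inv_mul_exp, abs_mul, abs_mul, abs_neg, abs_div,
    abs_of_pos (exp_pos _), abs_of_pos (by positivity : 0 < 2 * s),
    abs_of_pos (by positivity : 0 < (√(4 * π * s))⁻¹)]
  ring

theorem integral_abs_heatKernelDeriv (hs : 0 < s) :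
    ∫ x, |heatKernelDeriv s x| = (√(π * s))⁻¹ := by
  have hsqrt : √(4 * π * s) = 2 * √(π * s) := by
    rw [mul_assoc, sqrt_mul zero_le_four, show (4:ℝ) = 2 ^ 2 by norm_num, sqrt_sq zero_le_two]
  simp only [abs_heatKernelDeriv hs, integral_const_mul,
    integral_abs_mul_exp_neg_mul_sq (by positivity : 0 < (4 * s)⁻¹), hsqrt]
  field_simp
  ring

theorem abs_heatKernelDeriv_add_le (hs : 0 < s) (y : ℝ) {t : ℝ} (ht : |t| < 1) :
    |heatKernelDeriv s (y + t)| ≤ ((2 * s)⁻¹ * (√(4 * π * s))⁻¹ * exp (4 * s)⁻¹) *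
      ((|y| + 1) * exp (-(8 * s)⁻¹ * y ^ 2)) := by
  have hyt : |y + t| ≤ |y| + 1 := (abs_add_le y t).trans (by linarith)
  -- `(y + t) ^ 2 ≥ y ^ 2 / 2 - t ^ 2` trades the unit shift for half of the Gaussian decay
  have hsq : y ^ 2 / 2 - 1 ≤ (y + t) ^ 2 := by
    have : t ^ 2 < 1 := by rw [← sq_abs]; nlinarith [abs_nonneg t]
    nlinarith [sq_nonneg (y + 2 * t)]
  have hexp : exp (-(4 * s)⁻¹ * (y + t) ^ 2) ≤ exp (4 * s)⁻¹ * exp (-(8 * s)⁻¹ * y ^ 2) := by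
    rw [← exp_add, exp_le_exp, show (8 * s)⁻¹ = (4 * s)⁻¹ / 2 by field_simp; ring]
    nlinarith [mul_le_mul_of_nonneg_left hsq (inv_pos.2 (by positivity : 0 < 4 * s)).le]
  calc |heatKernelDeriv s (y + t)|
      = ((2 * s)⁻¹ * (√(4 * π * s))⁻¹) * (|y + t| * exp (-(4 * s)⁻¹ * (y + t) ^ 2)) :=
        abs_heatKernelDeriv hs _
    _ ≤ ((2 * s)⁻¹ * (√(4 * π * s))⁻¹) *
          ((|y| + 1) * (exp (4 * s)⁻¹ * exp (-(8 * s)⁻¹ * y ^ 2))) := by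
        gcongr
    _ = _ := by ring

end HeatKernel

section HeatFlow

variable {s c r M L : ℝ} {φ : ℝ → ℝ}

theorem heatFlow_const_sub (hs : 0 < s) (hφ : Measurable φ) (hbd : ∀ z, |φ z| ≤ M) (c x : ℝ) :
    heatFlow s (fun z => c - φ z) x = c - heatFlow s φ x := by
  have h := integral_comp_sub_mul_sub_const (integrable_heatKernel hs) hφ hbd c x
  rw [integral_heatKernel hs, one_mul] at h
  calc ∫ z, heatKernel s (x - z) * (c - φ z) = -∫ z, heatKernel s (x - z) * (φ z - c) := by
        rw [← integral_neg]; congr 1 with z; ring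
    _ = c - heatFlow s φ x := by rw [h, heatFlow]; ring

theorem abs_heatFlow_le (hs : 0 < s) (hφ : Measurable φ) (hbd : ∀ z, |φ z| ≤ M) (x : ℝ) :
    |heatFlow s φ x| ≤ M := by
  have h := abs_integral_comp_sub_mul_sub_le (c := 0) (integrable_heatKernel hs) hφ
    (by simpa using hbd) x
  simp only [mul_zero, sub_zero, abs_of_pos (heatKernel_pos hs _), integral_heatKernel hs,
    mul_one] at h
  exact h

theorem heatFlow_pos (hs : 0 < s) (hφ : Continuous φ) (h0 : ∀ z, 0 ≤ φ z)
    (hbd : ∀ z, |φ z| ≤ M) {z₀ : ℝ} (hz₀ : φ z₀ ≠ 0) (x : ℝ) : 0 < heatFlow s φ x :=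
  integral_comp_sub_mul_pos (continuous_heatKernel s) (integrable_heatKernel hs)
    (heatKernel_pos hs) hφ h0 hbd hz₀ x

theorem hasDerivAt_heatFlow (hs : 0 < s) (hφ : Measurable φ) (hbd : ∀ z, |φ z| ≤ M) (x : ℝ) :
    HasDerivAt (heatFlow s φ) (∫ z, heatKernelDeriv s (x - z) * φ z) x :=
  hasDerivAt_integral_comp_sub_mul (integrable_heatKernel hs) (hasDerivAt_heatKernel s)
    ((integrable_abs_add_one_mul_exp_neg_mul_sq (by positivity)).const_mul _)
    (fun y _ ht => abs_heatKernelDeriv_add_le hs y ht) hφ hbd x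

theorem abs_deriv_heatFlow_le (hs : 0 < s) (hφ : Measurable φ) (hosc : ∀ z, |φ z - c| ≤ r)
    (x : ℝ) : |deriv (heatFlow s φ) x| ≤ r * (√(π * s))⁻¹ := by
  have hbd : ∀ z, |φ z| ≤ |c| + r := fun z => abs_le_abs_add_of_abs_sub_le (hosc z)
  have h := abs_integral_comp_sub_mul_sub_le (integrable_heatKernelDeriv hs) hφ hosc x
  rwa [integral_heatKernelDeriv, zero_mul, sub_zero, integral_abs_heatKernelDeriv hs,
    ← (hasDerivAt_heatFlow hs hφ hbd x).deriv] at h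

theorem abs_exp_neg_mul_heatFlow_le (hs : 0 < s) (hφ : Measurable φ) (hbd : ∀ z, |φ z| ≤ M)
    (x : ℝ) : |exp (-s) * heatFlow s φ x| ≤ exp (-s) * M := by
  rw [abs_mul, abs_of_pos (exp_pos _)]
  exact mul_le_mul_of_nonneg_left (abs_heatFlow_le hs hφ hbd x) (exp_pos _).le

theorem abs_exp_neg_mul_deriv_heatFlow_le (hs : 0 < s) (hφ : Measurable φ)
    (hosc : ∀ z, |φ z - c| ≤ r) (x : ℝ) :
    |exp (-s) * deriv (heatFlow s φ) x| ≤ r * (exp (-s) / √(π * s)) := by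
  rw [abs_mul, abs_of_pos (exp_pos _)]
  calc exp (-s) * |deriv (heatFlow s φ) x| ≤ exp (-s) * (r * (√(π * s))⁻¹) := by
        gcongr; exact abs_deriv_heatFlow_le hs hφ hosc x
    _ = r * (exp (-s) / √(π * s)) := by ring

theorem tendsto_heatFlow_atTop (hs : 0 < s) (hφ : Measurable φ) (hbd : ∀ z, |φ z| ≤ M)
    (hlim : Tendsto φ atTop (𝓝 L)) : Tendsto (heatFlow s φ) atTop (𝓝 L) := by
  have h := tendsto_integral_comp_sub_mul_atTop (integrable_heatKernel hs) hφ hbd hlim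
  rwa [integral_heatKernel hs, one_mul] at h

theorem tendsto_deriv_heatFlow_atTop (hs : 0 < s) (hφ : Measurable φ) (hbd : ∀ z, |φ z| ≤ M)
    (hlim : Tendsto φ atTop (𝓝 L)) : Tendsto (deriv (heatFlow s φ)) atTop (𝓝 0) := by
  have h := tendsto_integral_comp_sub_mul_atTop (integrable_heatKernelDeriv hs) hφ hbd hlim
  rw [integral_heatKernelDeriv, zero_mul] at h
  exact h.congr fun x => (hasDerivAt_heatFlow hs hφ hbd x).deriv.symm

end HeatFlow

section Bessel

variable {τ c r k M L : ℝ} {φ : ℝ → ℝ}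

theorem besselB_eq_integral_heatFlow (τ c : ℝ) (φ : ℝ → ℝ) (ξ : ℝ) :
    besselB τ c φ ξ = ∫ s in Ioi 0, exp (-s) * heatFlow s φ (ξ - τ * c * s) := by
  unfold besselB heatFlow
  congr 1 with s
  rw [← integral_const_mul, ← integral_add_right_eq_self _ (τ * c * s)]
  congr 1 with z
  rw [add_sub_cancel_right, heatKernel, show ξ - (z + τ * c * s) = ξ - τ * c * s - z by ring]
  ring

theorem aestronglyMeasurable_heatFlow_comp (hφ : Measurable φ) (r ξ : ℝ) :
    AEStronglyMeasurable (fun s => exp (-s) * heatFlow s φ (ξ - r * s))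
      (volume.restrict (Ioi 0)) :=
  (by fun_prop : Continuous fun s : ℝ => exp (-s)).aestronglyMeasurable.mul
    (stronglyMeasurable_integral_comp_sub_mul measurable_heatKernel
      (measurable_const.sub (measurable_const.mul measurable_id)) hφ).aestronglyMeasurable

theorem aestronglyMeasurable_deriv_heatFlow_comp (hφ : Measurable φ) (hbd : ∀ z, |φ z| ≤ M)
    (r ξ : ℝ) :
    AEStronglyMeasurable (fun s => exp (-s) * deriv (heatFlow s φ) (ξ - r * s))
      (volume.restrict (Ioi 0)) := by
  have h : StronglyMeasurable fun s => ∫ z, heatKernelDeriv s (ξ - r * s - z) * φ z :=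
    stronglyMeasurable_integral_comp_sub_mul measurable_heatKernelDeriv
      (measurable_const.sub (measurable_const.mul measurable_id)) hφ
  refine ((by fun_prop : Continuous fun s : ℝ => exp (-s)).aestronglyMeasurable.mul
    h.aestronglyMeasurable).congr ?_
  refine ae_restrict_of_forall_mem measurableSet_Ioi fun s hs => ?_
  dsimp only [Pi.mul_apply]
  rw [(hasDerivAt_heatFlow hs hφ hbd _).deriv]

theorem integrableOn_heatFlow_comp (hφ : Measurable φ) (hbd : ∀ z, |φ z| ≤ M) (r ξ : ℝ) :
    IntegrableOn (fun s => exp (-s) * heatFlow s φ (ξ - r * s)) (Ioi 0) :=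
  Integrable.mono' ((integrableOn_exp_neg_Ioi 0).mul_const M)
    (aestronglyMeasurable_heatFlow_comp hφ r ξ) (ae_restrict_of_forall_mem measurableSet_Ioi
      fun _ hs => abs_exp_neg_mul_heatFlow_le hs hφ hbd _)

theorem hasDerivAt_besselB (hφ : Measurable φ) (hbd : ∀ z, |φ z| ≤ M) (ξ : ℝ) :
    HasDerivAt (besselB τ c φ)
      (∫ s in Ioi 0, exp (-s) * deriv (heatFlow s φ) (ξ - τ * c * s)) ξ := by
  simp only [funext (besselB_eq_integral_heatFlow τ c φ)]
  refine (hasDerivAt_integral_of_dominated_loc_of_deriv_le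
    (F' := fun x s => exp (-s) * deriv (heatFlow s φ) (x - τ * c * s))
    (bound := fun s => M * (exp (-s) / √(π * s))) univ_mem
    (Eventually.of_forall fun x => aestronglyMeasurable_heatFlow_comp hφ _ x)
    (integrableOn_heatFlow_comp hφ hbd _ ξ) (aestronglyMeasurable_deriv_heatFlow_comp hφ hbd _ ξ)
    (ae_restrict_of_forall_mem measurableSet_Ioi fun s hs x _ =>
      abs_exp_neg_mul_deriv_heatFlow_le (c := 0) hs hφ (by simpa using hbd) _)
    (integrableOn_exp_neg_div_sqrt_pi_mul.const_mul M)
    (ae_restrict_of_forall_mem measurableSet_Ioi fun s hs x _ => ?_)).2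
  exact ((hasDerivAt_heatFlow hs hφ hbd _).differentiableAt.hasDerivAt.comp_sub_const x
    _).const_mul _

theorem abs_deriv_besselB_le (hφ : Measurable φ) (hosc : ∀ z, |φ z - k| ≤ r) (ξ : ℝ) :
    |deriv (besselB τ c φ) ξ| ≤ r := by
  have hbd : ∀ z, |φ z| ≤ |k| + r := fun z => abs_le_abs_add_of_abs_sub_le (hosc z)
  rw [(hasDerivAt_besselB hφ hbd ξ).deriv]
  refine (norm_integral_le_of_norm_le
    (f := fun s => exp (-s) * deriv (heatFlow s φ) (ξ - τ * c * s))
    (integrableOn_exp_neg_div_sqrt_pi_mul.const_mul r) (ae_restrict_of_forall_mem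
      measurableSet_Ioi fun s hs => abs_exp_neg_mul_deriv_heatFlow_le hs hφ hosc _)).trans_eq ?_
  rw [integral_const_mul, integral_exp_neg_div_sqrt_pi_mul, mul_one]

theorem besselB_const_sub (hφ : Measurable φ) (hbd : ∀ z, |φ z| ≤ M) (k ξ : ℝ) :
    besselB τ c (fun z => k - φ z) ξ = k - besselB τ c φ ξ := by
  simp only [besselB_eq_integral_heatFlow]
  rw [setIntegral_congr_fun measurableSet_Ioi fun s hs => by
      rw [heatFlow_const_sub hs hφ hbd, mul_sub],
    integral_sub ((integrableOn_exp_neg_Ioi 0).mul_const k)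
      (integrableOn_heatFlow_comp hφ hbd _ ξ),
    integral_mul_const, integral_exp_neg_Ioi_zero, one_mul]

theorem besselB_pos (hφ : Continuous φ) (h0 : ∀ z, 0 ≤ φ z) (hbd : ∀ z, |φ z| ≤ M)
    (hne : ∃ t, φ t ≠ 0) (ξ : ℝ) : 0 < besselB τ c φ ξ := by
  obtain ⟨t, ht⟩ := hne
  have hpos : ∀ s ∈ Ioi (0:ℝ), 0 < exp (-s) * heatFlow s φ (ξ - τ * c * s) := fun s hs =>
    mul_pos (exp_pos _) (heatFlow_pos hs hφ h0 hbd ht _)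
  rw [besselB_eq_integral_heatFlow, setIntegral_pos_iff_support_of_nonneg_ae
    (ae_restrict_of_forall_mem measurableSet_Ioi fun s hs => (hpos s hs).le)
    (integrableOn_heatFlow_comp hφ.measurable hbd _ ξ)]
  calc (0 : ENNReal) < volume (Ioi (0:ℝ)) := by simp
    _ ≤ _ := measure_mono fun s hs => mem_inter (hpos s hs).ne' hs

theorem besselB_lt_of_le (hφ : Continuous φ) (h0 : ∀ z, 0 ≤ φ z) (h1 : ∀ z, φ z ≤ k)
    (hne : ∃ t, φ t ≠ k) (ξ : ℝ) : besselB τ c φ ξ < k := by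
  have hbd : ∀ z, |φ z| ≤ k := fun z => (abs_of_nonneg (h0 z)).trans_le (h1 z)
  have hpos := besselB_pos (τ := τ) (c := c) (φ := fun z => k - φ z) (continuous_const.sub hφ)
    (fun z => sub_nonneg.2 (h1 z))
    (fun z => abs_sub_le_iff.2 ⟨by linarith [h0 z], by linarith [h0 z, h1 z]⟩)
    (hne.imp fun _ ht => sub_ne_zero.2 (Ne.symm ht)) ξ
  rw [besselB_const_sub hφ.measurable hbd] at hpos
  linarith

theorem tendsto_besselB_atTop (hφ : Measurable φ) (hbd : ∀ z, |φ z| ≤ M)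
    (hlim : Tendsto φ atTop (𝓝 L)) : Tendsto (besselB τ c φ) atTop (𝓝 L) := by
  have key : Tendsto (fun ξ => ∫ s in Ioi 0, exp (-s) * heatFlow s φ (ξ - τ * c * s)) atTop
      (𝓝 (∫ s in Ioi 0, exp (-s) * L)) := by
    refine tendsto_integral_filter_of_dominated_convergence (fun s => exp (-s) * M)
      (Eventually.of_forall fun x => aestronglyMeasurable_heatFlow_comp hφ _ x)
      (Eventually.of_forall fun x => ae_restrict_of_forall_mem measurableSet_Ioi fun s hs =>
        abs_exp_neg_mul_heatFlow_le hs hφ hbd _)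
      ((integrableOn_exp_neg_Ioi 0).mul_const M)
      (ae_restrict_of_forall_mem measurableSet_Ioi fun s hs => ?_)
    exact ((tendsto_heatFlow_atTop hs hφ hbd hlim).comp
      (tendsto_atTop_add_const_right _ _ tendsto_id)).const_mul _
  rw [integral_mul_const, integral_exp_neg_Ioi_zero, one_mul] at key
  exact key.congr fun ξ => (besselB_eq_integral_heatFlow τ c φ ξ).symm

theorem tendsto_deriv_besselB_atTop (hφ : Measurable φ) (hbd : ∀ z, |φ z| ≤ M)
    (hlim : Tendsto φ atTop (𝓝 L)) : Tendsto (deriv (besselB τ c φ)) atTop (𝓝 0) := by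
  have key : Tendsto (fun ξ => ∫ s in Ioi 0, exp (-s) * deriv (heatFlow s φ) (ξ - τ * c * s))
      atTop (𝓝 (∫ s in Ioi (0:ℝ), (0:ℝ))) := by
    refine tendsto_integral_filter_of_dominated_convergence
      (fun s => M * (exp (-s) / √(π * s)))
      (Eventually.of_forall fun x => aestronglyMeasurable_deriv_heatFlow_comp hφ hbd _ x)
      (Eventually.of_forall fun x => ae_restrict_of_forall_mem measurableSet_Ioi fun s hs =>
        abs_exp_neg_mul_deriv_heatFlow_le (c := 0) hs hφ (by simpa using hbd) _)
      (integrableOn_exp_neg_div_sqrt_pi_mul.const_mul M)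
      (ae_restrict_of_forall_mem measurableSet_Ioi fun s hs => ?_)
    have h := ((tendsto_deriv_heatFlow_atTop hs hφ hbd hlim).comp
      (tendsto_atTop_add_const_right _ (-(τ * c * s)) tendsto_id)).const_mul (exp (-s))
    rwa [mul_zero] at h
  rw [integral_zero] at key
  exact key.congr fun ξ => (hasDerivAt_besselB hφ hbd ξ).deriv.symm

end Bessel

theorem besselB_estimates_general
    (a b τ c : ℝ)
    (φ : ℝ → ℝ) (hcont : Continuous φ)
    (h0 : ∀ t, 0 ≤ φ t) (h1 : ∀ t, φ t ≤ a / b)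
    (hne0 : ∃ t, φ t ≠ 0) (hneab : ∃ t, φ t ≠ a / b)
    (hlim : Tendsto φ atTop (𝓝 (a/b))) :
    (∀ t, 0 < besselB τ c φ t) ∧ (∀ t, besselB τ c φ t < a / b) ∧
    (∀ t, |deriv (besselB τ c φ) t| ≤ a / (2*b)) ∧
    Tendsto (besselB τ c φ) atTop (𝓝 (a/b)) ∧
    Tendsto (deriv (besselB τ c φ)) atTop (𝓝 0) := by
  have hbd : ∀ t, |φ t| ≤ a / b := fun t => (abs_of_nonneg (h0 t)).trans_le (h1 t)
  have hosc : ∀ t, |φ t - a / b / 2| ≤ a / b / 2 := fun t =>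
    abs_sub_le_iff.2 ⟨by linarith [h1 t], by linarith [h0 t]⟩
  refine ⟨besselB_pos hcont h0 hbd hne0, besselB_lt_of_le hcont h0 h1 hneab, fun t => ?_,
    tendsto_besselB_atTop hcont.measurable hbd hlim,
    tendsto_deriv_besselB_atTop hcont.measurable hbd hlim⟩
  exact (abs_deriv_besselB_le hcont.measurable hosc t).trans_eq (by ring)

/-- basic estimates for the Bessel potential `η = B[φ̂]`:
`0 < η < a/b`, `|η'| ≤ a/(2b)`, `η → a/b` and `η' → 0` at `+∞`. -/
theorem besselB_estimates
    (a b τ c : ℝ) (ha : 0 < a) (hb : 0 < b) (hτ : 0 ≤ τ) (hc : 0 < c)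
    (φ : ℝ → ℝ) (hcont : Continuous φ)
    (h0 : ∀ t, 0 ≤ φ t) (h1 : ∀ t, φ t ≤ a / b)
    (hne0 : ∃ t, φ t ≠ 0) (hneab : ∃ t, φ t ≠ a / b)
    (hlim : Tendsto φ atTop (𝓝 (a/b))) :
    (∀ t, 0 < besselB τ c φ t) ∧ (∀ t, besselB τ c φ t < a / b) ∧
    (∀ t, |deriv (besselB τ c φ) t| ≤ a / (2*b)) ∧
    Tendsto (besselB τ c φ) atTop (𝓝 (a/b)) ∧
    Tendsto (deriv (besselB τ c φ)) atTop (𝓝 0) :=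
  besselB_estimates_general a b τ c φ hcont h0 h1 hne0 hneab hlim
end

section
/- Let m>1, a,b>0, c∈ℝ, let h ∈ C¹([0,a/b]) with h(0)=0, and suppose ψ ∈ C¹((0,a/b)) is bounded, ψ(u)>0 for u∈(0,a/b), ψ(u)→0 as u→0⁺ and as u→(a/b)⁻, and ψ satisfies ψ'(u) = c + h'(u) + mu^{m−1}(bu²−au)/ψ(u) for u∈(0,a/b). Then for every g ∈ C¹([0,a/b]) with g(a/b)=0 and g'(u)<0 on (0,a/b): c∫₀^{a/b}g(u)du ≥ 2∫₀^{a/b}√(−g'(u)g(u)·mu^{m−1}(au−bu²))du − ∫₀^{a/b}(−g'(u))h(u)du. -/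
/-!
On `(0, a/b)` write `F u = m u^(m-1) (a u - b u²) ≥ 0`, so the phase-plane equation reads
`ψ' = c + h' - F/ψ`. Then `(g (ψ - h))' = g' ψ - g F/ψ + c g - g' h`, and AM–GM applied to
`-g' ψ` and `g F/ψ` bounds this by `c g - 2√(-g' g F) - g' h`. The boundary term `g (ψ - h)`
vanishes at both ends (`ψ → 0`, `h 0 = 0`, `g (a/b) = 0`), so integrating gives the inequality.
Since `ψ'` need not be integrable near the endpoints, the integration uses the one-sided
fundamental theorem of calculus, which only needs an integrable upper bound of the derivative.
-/

open MeasureTheory Filter Topology Set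

lemma two_mul_sqrt_mul_le_add {x y : ℝ} (hx : 0 ≤ x) (hy : 0 ≤ y) :
    2 * √(x * y) ≤ x + y := by
  rw [Real.sqrt_mul hx]
  nlinarith [Real.sq_sqrt hx, Real.sq_sqrt hy, sq_nonneg (√x - √y)]

lemma mul_sub_add_mul_sub_le_of_eq_sub_div {c g g' ψ ψ' h h' F : ℝ} (hψ : 0 < ψ) (hg : 0 ≤ g)
    (hg' : g' ≤ 0) (hF : 0 ≤ F) (hψ' : ψ' = c + h' - F / ψ) :
    g' * (ψ - h) + g * (ψ' - h') ≤ c * g - 2 * √(-g' * g * F) + -g' * h := by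
  have amgm := two_mul_sqrt_mul_le_add (mul_nonneg (neg_nonneg.2 hg') hψ.le)
    (div_nonneg (mul_nonneg hg hF) hψ.le)
  rw [show -g' * ψ * (g * F / ψ) = -g' * g * F by field_simp] at amgm
  have expand : g' * (ψ - h) + g * (ψ' - h') = g' * ψ - g * F / ψ + c * g + -g' * h := by
    rw [hψ']; ring
  linarith

lemma integrableOn_Icc_of_continuousOn_of_eqOn_Ioo {E : Type*} [NormedAddCommGroup E]
    {μ : Measure ℝ} [IsLocallyFiniteMeasure μ] [NullSingletonClass μ] {f g : ℝ → E} {a b : ℝ}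
    (hf : ContinuousOn f (Icc a b)) (hfg : EqOn f g (Ioo a b)) : IntegrableOn g (Icc a b) μ := by
  rw [integrableOn_Icc_iff_integrableOn_Ioo]
  exact (hf.integrableOn_Icc.mono_set Ioo_subset_Icc_self).congr_fun hfg measurableSet_Ioo

lemma hasDerivAt_extendFrom_Ioo {ψ : ℝ → ℝ} {α β u : ℝ} (hψ : DifferentiableOn ℝ ψ (Ioo α β))
    (hu : u ∈ Ioo α β) : HasDerivAt (extendFrom (Ioo α β) ψ) (deriv ψ u) u :=
  (hψ.differentiableAt (isOpen_Ioo.mem_nhds hu)).hasDerivAt.congr_of_eventuallyEq <| by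
    filter_upwards [isOpen_Ioo.mem_nhds hu] with v hv using extendFrom_extends hψ.continuousOn v hv

lemma nonneg_of_deriv_nonpos_of_right_eq_zero {g : ℝ → ℝ} {α β : ℝ}
    (hg : ContinuousOn g (Icc α β)) (hgd : DifferentiableOn ℝ g (Ioo α β))
    (hg' : ∀ u ∈ Ioo α β, deriv g u ≤ 0) (hgβ : g β = 0) {u : ℝ} (hu : u ∈ Icc α β) : 0 ≤ g u :=
  hgβ ▸ antitoneOn_of_deriv_nonpos (convex_Icc α β) hg (by rwa [interior_Icc])
    (by rwa [interior_Icc]) hu (right_mem_Icc.2 (hu.1.trans hu.2)) hu.2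

theorem integral_sqrt_le_of_deriv_eq_sub_div {α β c : ℝ} {g h ψ F : ℝ → ℝ} (hαβ : α < β)
    (hg : ContDiffOn ℝ 1 g (Icc α β)) (hgβ : g β = 0) (hg' : ∀ u ∈ Ioo α β, deriv g u ≤ 0)
    (hh : ContDiffOn ℝ 1 h (Icc α β)) (hhα : h α = 0)
    (hF : ContinuousOn F (Icc α β)) (hF0 : ∀ u ∈ Ioo α β, 0 ≤ F u)
    (hψ : DifferentiableOn ℝ ψ (Ioo α β)) (hψpos : ∀ u ∈ Ioo α β, 0 < ψ u)
    (hψα : Tendsto ψ (𝓝[>] α) (𝓝 0)) (hψβ : Tendsto ψ (𝓝[<] β) (𝓝 0))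
    (hψ' : ∀ u ∈ Ioo α β, deriv ψ u = c + deriv h u - F u / ψ u) :
    2 * (∫ u in α..β, √(-deriv g u * g u * F u)) - ∫ u in α..β, -deriv g u * h u ≤
      c * ∫ u in α..β, g u := by
  have hg0 : ∀ u ∈ Icc α β, 0 ≤ g u := fun u =>
    nonneg_of_deriv_nonpos_of_right_eq_zero hg.continuousOn
      (hg.differentiableOn one_ne_zero |>.mono Ioo_subset_Icc_self) hg' hgβ
  set G := derivWithin g (Icc α β)
  have hG : ContinuousOn G (Icc α β) := hg.continuousOn_derivWithin (uniqueDiffOn_Icc hαβ) le_rfl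
  have hGg : EqOn G (deriv g) (Ioo α β) := fun u hu =>
    derivWithin_of_mem_nhds (Icc_mem_nhds hu.1 hu.2)
  set Ψ := extendFrom (Ioo α β) ψ
  have hΦ' : ∀ u ∈ Ioo α β, HasDerivAt (fun u => g u * (Ψ u - h u))
      (deriv g u * (ψ u - h u) + g u * (deriv ψ u - deriv h u)) u := fun u hu => by
    have hIcc := Icc_mem_nhds hu.1 hu.2
    rw [← extendFrom_extends hψ.continuousOn u hu]
    exact (hg.differentiableOn one_ne_zero |>.differentiableAt hIcc).hasDerivAt.mul
      ((hasDerivAt_extendFrom_Ioo hψ hu).sub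
        (hh.differentiableOn one_ne_zero |>.differentiableAt hIcc).hasDerivAt)
  have iS : IntegrableOn (fun u => √(-deriv g u * g u * F u)) (Icc α β) :=
    integrableOn_Icc_of_continuousOn_of_eqOn_Ioo ((hG.neg.mul hg.continuousOn).mul hF).sqrt
      fun u hu => by simp only [Pi.mul_apply, Pi.neg_apply, hGg hu]
  have iGh : IntegrableOn (fun u => -deriv g u * h u) (Icc α β) :=
    integrableOn_Icc_of_continuousOn_of_eqOn_Ioo (hG.neg.mul hh.continuousOn)
      fun u hu => by simp only [Pi.mul_apply, Pi.neg_apply, hGg hu]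
  have ig : IntegrableOn g (Icc α β) := hg.continuousOn.integrableOn_Icc
  have hΦ : ContinuousOn (fun u => g u * (Ψ u - h u)) (Icc α β) :=
    hg.continuousOn.mul
      ((continuousOn_Icc_extendFrom_Ioo hψ.continuousOn hψα hψβ).sub hh.continuousOn)
  have ftc := intervalIntegral.sub_le_integral_of_hasDeriv_right_of_le
    (φ := fun u => c * g u - 2 * √(-deriv g u * g u * F u) + -deriv g u * h u) hαβ.le hΦ
    (fun u hu => (hΦ' u hu).hasDerivWithinAt) (((ig.const_mul c).sub (iS.const_mul 2)).add iGh)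
    fun u hu => mul_sub_add_mul_sub_le_of_eq_sub_div (hψpos u hu)
      (hg0 u (Ioo_subset_Icc_self hu)) (hg' u hu) (hF0 u hu) (hψ' u hu)
  have toInterval {f : ℝ → ℝ} (hf : IntegrableOn f (Icc α β)) : IntervalIntegrable f volume α β :=
    (intervalIntegrable_iff_integrableOn_Ioc_of_le hαβ.le).2 (hf.mono_set Ioc_subset_Icc_self)
  have jg := (toInterval ig).const_mul c
  have jS := (toInterval iS).const_mul 2
  rw [intervalIntegral.integral_add (jg.sub jS) (toInterval iGh),
    intervalIntegral.integral_sub jg jS, intervalIntegral.integral_const_mul,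
    intervalIntegral.integral_const_mul] at ftc
  have hΨα : Ψ α = 0 := eq_lim_at_left_extendFrom_Ioo hαβ hψα
  simp only [hgβ, hhα, hΨα] at ftc
  linarith

theorem phase_plane_variational_inequality_general
    (m a b c : ℝ) (h ψ : ℝ → ℝ)
    (hm : 1 < m) (ha : 0 < a) (hb : 0 < b)
    (hh : ContDiffOn ℝ 1 h (Set.Icc 0 (a/b))) (hh0 : h 0 = 0)
    (hψC1 : ContDiffOn ℝ 1 ψ (Set.Ioo 0 (a/b)))
    (hψpos : ∀ u ∈ Set.Ioo 0 (a/b), 0 < ψ u)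
    (hψ0 : Tendsto ψ (𝓝[>] 0) (𝓝 0))
    (hψab : Tendsto ψ (𝓝[<] (a/b)) (𝓝 0))
    (hODE : ∀ u ∈ Set.Ioo 0 (a/b),
      deriv ψ u = c + deriv h u + m * u^(m-1) * (b*u^2 - a*u) / ψ u) :
    ∀ g : ℝ → ℝ, ContDiffOn ℝ 1 g (Set.Icc 0 (a/b)) → g (a/b) = 0 →
      (∀ u ∈ Set.Ioo 0 (a/b), deriv g u < 0) →
      c * ∫ u in (0:ℝ)..(a/b), g u ≥
        2 * (∫ u in (0:ℝ)..(a/b),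
            Real.sqrt (-(deriv g u) * g u * (m * u^(m-1) * (a*u - b*u^2))))
        - ∫ u in (0:ℝ)..(a/b), (-(deriv g u)) * h u := by
  intro g hg hgr hg'
  have hF : ContinuousOn (fun u : ℝ => m * u ^ (m - 1) * (a * u - b * u ^ 2)) (Icc 0 (a / b)) :=
    (continuousOn_const.mul (continuousOn_id.rpow_const fun _ _ => Or.inr (by linarith))).mul
      (by fun_prop)
  have hF0 : ∀ u ∈ Ioo 0 (a / b), 0 ≤ m * u ^ (m - 1) * (a * u - b * u ^ 2) := fun u hu => by
    have hbu : b * u < a := by rw [mul_comm]; exact (lt_div_iff₀ hb).1 hu.2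
    have : 0 ≤ a * u - b * u ^ 2 := by nlinarith [hu.1]
    have := Real.rpow_nonneg hu.1.le (m - 1)
    positivity
  exact integral_sqrt_le_of_deriv_eq_sub_div (div_pos ha hb) hg hgr (fun u hu => (hg' u hu).le)
    hh hh0 hF hF0 (hψC1.differentiableOn one_ne_zero) hψpos hψ0 hψab
    fun u hu => by rw [hODE u hu]; ring

/-- variational inequality from the phase-plane equation:
if `ψ` is a positive bounded `C¹` trajectory on `(0, a/b)` with `ψ → 0` at both ends,
solving `ψ' = c + h' + mu^{m-1}(bu² - au)/ψ`, then every admissible test function `g`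
yields `c∫g ≥ 2∫√(-g'g·mu^{m-1}(au-bu²)) - ∫(-g')h`. -/
theorem phase_plane_variational_inequality
    (m a b c : ℝ) (h ψ : ℝ → ℝ)
    (hm : 1 < m) (ha : 0 < a) (hb : 0 < b)
    (hh : ContDiffOn ℝ 1 h (Set.Icc 0 (a/b))) (hh0 : h 0 = 0)
    (hψC1 : ContDiffOn ℝ 1 ψ (Set.Ioo 0 (a/b)))
    (hψbdd : ∃ M : ℝ, ∀ u ∈ Set.Ioo 0 (a/b), |ψ u| ≤ M)
    (hψpos : ∀ u ∈ Set.Ioo 0 (a/b), 0 < ψ u)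
    (hψ0 : Tendsto ψ (𝓝[>] 0) (𝓝 0))
    (hψab : Tendsto ψ (𝓝[<] (a/b)) (𝓝 0))
    (hODE : ∀ u ∈ Set.Ioo 0 (a/b),
      deriv ψ u = c + deriv h u + m * u^(m-1) * (b*u^2 - a*u) / ψ u) :
    ∀ g : ℝ → ℝ, ContDiffOn ℝ 1 g (Set.Icc 0 (a/b)) → g (a/b) = 0 →
      (∀ u ∈ Set.Ioo 0 (a/b), deriv g u < 0) →
      c * ∫ u in (0:ℝ)..(a/b), g u ≥
        2 * (∫ u in (0:ℝ)..(a/b),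
            Real.sqrt (-(deriv g u) * g u * (m * u^(m-1) * (a*u - b*u^2))))
        - ∫ u in (0:ℝ)..(a/b), (-(deriv g u)) * h u :=
  phase_plane_variational_inequality_general m a b c h ψ hm ha hb hh hh0 hψC1 hψpos hψ0 hψab hODE
end

section
/- Fix m>1 and I>0, and set f(s) = ms^m(1−s). There exist δ ∈ (0,1] and a C¹ function ρ₀:[0,δ)→[0,∞) with ρ₀(0)=0, ρ₀(s)>0 for s∈(0,δ), satisfying ρ₀'(s) = 2I√(ρ₀(s)) − 2f(s) on (0,δ), such that ρ₀(s) = I²s² + o(s²) as s→0⁺; moreover there exists s₀ ∈ (0,δ) such that ρ₀(s) ≥ I²s²/2 for all s∈(0,s₀). -/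
/-!
Writing `ρ₀ = (I s - H)²` turns `ρ₀' = 2 I √ρ₀ - 2 f` into the Volterra problem
`H' = f(s) / (I s - H)`, `H(0) = 0`. While `0 ≤ H ≤ I s / 2`, the right-hand side is Lipschitz
in `H` with constant `O(s^(m-2))`, which is integrable at `0` because `m > 1`. So, once `H` is
clamped to `[0, I s / 2]`, the integral operator is a contraction on a short interval `[0, δ]`.
Its fixed point satisfies `0 ≤ H ≤ (2/I) s^m ≤ I s / 2`, so the clamp is inactive, and
`|ρ₀ - I² s²| ≤ 2 I s H ≤ 4 s^(m+1)` gives both the asymptotics and the lower bound.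
-/

open MeasureTheory intervalIntegral Filter Topology Set Asymptotics
open scoped BoundedContinuousFunction

theorem tendsto_rpow_nhds_zero {p : ℝ} (hp : 0 < p) :
    Tendsto (fun s : ℝ => s ^ p) (𝓝 0) (𝓝 0) := by
  simpa [Real.zero_rpow hp.ne'] using (Real.continuousAt_rpow_const 0 p (Or.inr hp.le)).tendsto

theorem eventually_mul_rpow_lt {p ε : ℝ} (hp : 0 < p) (hε : 0 < ε) (c : ℝ) :
    ∀ᶠ s in 𝓝[>] 0, c * s ^ p < ε :=
  (((tendsto_rpow_nhds_zero hp).const_mul c).mono_left nhdsWithin_le_nhds).eventually_lt_const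
    (by simpa using hε)

theorem isLittleO_of_abs_le_rpow_mul {g k : ℝ → ℝ} {c p : ℝ} (hp : 0 < p)
    (h : ∀ᶠ s in 𝓝[>] 0, |g s| ≤ c * s ^ p * |k s|) : g =o[𝓝[>] 0] k := by
  have hsmall : (fun s : ℝ => c * s ^ p) =o[𝓝[>] 0] fun _ => (1 : ℝ) :=
    (isLittleO_one_iff ℝ).2 <| by
      simpa using ((tendsto_rpow_nhds_zero hp).const_mul c).mono_left nhdsWithin_le_nhds
  refine (IsBigO.of_bound 1 ?_).trans_isLittleO
    (by simpa using hsmall.mul_isBigO (isBigO_refl k _))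
  filter_upwards [h] with s hs
  simpa [abs_mul, mul_assoc] using
    hs.trans (mul_le_mul_of_nonneg_right (le_abs_self _) (abs_nonneg _))

theorem rpow_eq_rpow_sub_one_mul {s m : ℝ} (hs : 0 ≤ s) (hm : m ≠ 0) :
    s ^ m = s ^ (m - 1) * s := by
  simpa using Real.rpow_add_one' hs (by simpa using hm : m - 1 + 1 ≠ 0)

theorem integral_rpow_zero_left {r : ℝ} (hr : -1 < r) (s : ℝ) :
    ∫ t in 0..s, t ^ r = s ^ (r + 1) / (r + 1) := by
  rw [integral_rpow (Or.inl hr), Real.zero_rpow (by linarith), sub_zero]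

namespace Volterra

variable {F : ℝ → ℝ → ℝ} {L : ℝ → ℝ} {δ : ℝ}

/-- `t ↦ F t (u t)`, frozen outside `[0, δ]` so that it is continuous on all of `ℝ`. -/
noncomputable def integrand (hδ : 0 ≤ δ) (F : ℝ → ℝ → ℝ) (u : ℝ → ℝ) (t : ℝ) : ℝ :=
  F (projIcc 0 δ hδ t) (u (projIcc 0 δ hδ t))

theorem integrand_of_mem (hδ : 0 ≤ δ) {u : ℝ → ℝ} {t : ℝ} (ht : t ∈ Icc 0 δ) :
    integrand hδ F u t = F t (u t) := by
  simp [integrand, projIcc_of_mem hδ ht]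

theorem continuous_integrand (hδ : 0 ≤ δ)
    (hF : ContinuousOn (Function.uncurry F) (Icc 0 δ ×ˢ univ)) {u : ℝ → ℝ} (hu : Continuous u) :
    Continuous (integrand hδ F u) := by
  have hc : Continuous fun t => (projIcc 0 δ hδ t : ℝ) :=
    continuous_subtype_val.comp continuous_projIcc
  exact hF.comp_continuous (hc.prodMk (hu.comp hc)) fun t => ⟨(projIcc 0 δ hδ t).2, trivial⟩

noncomputable def op (hδ : 0 ≤ δ) (hF : ContinuousOn (Function.uncurry F) (Icc 0 δ ×ˢ univ))
    (u : ℝ →ᵇ ℝ) : ℝ →ᵇ ℝ :=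
  (BoundedContinuousFunction.mkOfCompact
    ⟨fun s : Icc 0 δ => ∫ t in 0..(s : ℝ), integrand hδ F u t,
      (continuous_primitive
        (fun _ _ => (continuous_integrand hδ hF u.continuous).intervalIntegrable _ _)
        0).comp continuous_subtype_val⟩).compContinuous
    ⟨projIcc 0 δ hδ, continuous_projIcc⟩

theorem op_apply (hδ : 0 ≤ δ) (hF : ContinuousOn (Function.uncurry F) (Icc 0 δ ×ˢ univ))
    (u : ℝ →ᵇ ℝ) (s : ℝ) :
    op hδ hF u s = ∫ t in 0..(projIcc 0 δ hδ s : ℝ), integrand hδ F u t :=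
  rfl

theorem nonneg_of_abs_sub_le (hFL : ∀ t ∈ Ioc 0 δ, ∀ x y, |F t x - F t y| ≤ L t * |x - y|) :
    ∀ t ∈ Ioc 0 δ, 0 ≤ L t := fun t ht => by
  simpa using (abs_nonneg _).trans (hFL t ht 1 0)

theorem integral_nonneg_of_abs_sub_le (hδ : 0 ≤ δ)
    (hFL : ∀ t ∈ Ioc 0 δ, ∀ x y, |F t x - F t y| ≤ L t * |x - y|) : 0 ≤ ∫ t in 0..δ, L t := by
  rw [integral_of_le hδ]
  exact setIntegral_nonneg measurableSet_Ioc (nonneg_of_abs_sub_le hFL)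

theorem dist_op_le (hδ : 0 ≤ δ) (hF : ContinuousOn (Function.uncurry F) (Icc 0 δ ×ˢ univ))
    (hFL : ∀ t ∈ Ioc 0 δ, ∀ x y, |F t x - F t y| ≤ L t * |x - y|)
    (hL : IntervalIntegrable L volume 0 δ) (u v : ℝ →ᵇ ℝ) :
    dist (op hδ hF u) (op hδ hF v) ≤ (∫ t in 0..δ, L t) * dist u v := by
  have hL0 := nonneg_of_abs_sub_le hFL
  refine (BoundedContinuousFunction.dist_le
    (mul_nonneg (integral_nonneg_of_abs_sub_le hδ hFL) dist_nonneg)).2 fun s => ?_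
  set x : ℝ := (projIcc 0 δ hδ s : ℝ)
  have hx : x ∈ Icc 0 δ := (projIcc 0 δ hδ s).2
  have hu := continuous_integrand hδ hF u.continuous
  have hv := continuous_integrand hδ hF v.continuous
  rw [op_apply, op_apply, Real.dist_eq, ← integral_sub (hu.intervalIntegrable _ _)
    (hv.intervalIntegrable _ _), ← Real.norm_eq_abs]
  calc ‖∫ t in 0..x, (integrand hδ F u t - integrand hδ F v t)‖
      ≤ ∫ t in 0..x, L t * dist u v := by
        refine norm_integral_le_of_norm_le hx.1 (ae_of_all _ fun t ht => ?_)
          ((hL.mono_set ?_).mul_const _)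
        · have ht' : t ∈ Ioc 0 δ := ⟨ht.1, ht.2.trans hx.2⟩
          rw [integrand_of_mem hδ (Ioc_subset_Icc_self ht'),
            integrand_of_mem hδ (Ioc_subset_Icc_self ht'), Real.norm_eq_abs]
          exact (hFL t ht' _ _).trans (mul_le_mul_of_nonneg_left
            (Real.dist_eq (u t) (v t) ▸ BoundedContinuousFunction.dist_coe_le_dist t) (hL0 t ht'))
        · rw [uIcc_of_le hx.1, uIcc_of_le hδ]
          exact Icc_subset_Icc_right hx.2
    _ = (∫ t in 0..x, L t) * dist u v := integral_mul_const _ _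
    _ ≤ (∫ t in 0..δ, L t) * dist u v := by
        gcongr
        exact integral_mono_interval le_rfl hx.1 hx.2
          ((ae_restrict_mem measurableSet_Ioc).mono hL0) hL

theorem exists_contDiff_hasDerivAt (hδ : 0 ≤ δ)
    (hF : ContinuousOn (Function.uncurry F) (Icc 0 δ ×ˢ univ))
    (hFL : ∀ t ∈ Ioc 0 δ, ∀ x y, |F t x - F t y| ≤ L t * |x - y|)
    (hL : IntervalIntegrable L volume 0 δ) (hL1 : ∫ t in 0..δ, L t < 1) :
    ∃ H : ℝ → ℝ, ContDiff ℝ 1 H ∧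
      ∀ s ∈ Icc 0 δ, HasDerivAt H (F s (H s)) s ∧ H s = ∫ t in 0..s, F t (H t) := by
  have hK : ContractingWith ⟨_, integral_nonneg_of_abs_sub_le hδ hFL⟩ (op hδ hF) :=
    ⟨hL1, LipschitzWith.of_dist_le_mul (dist_op_le hδ hF hFL hL)⟩
  set u := ContractingWith.fixedPoint _ hK
  have hu : op hδ hF u = u := hK.fixedPoint_isFixedPt
  have hφ := continuous_integrand hδ hF u.continuous
  have hHu : ∀ s ∈ Icc 0 δ, ∫ t in 0..s, integrand hδ F u t = u s := fun s hs => by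
    conv_rhs => rw [← hu, op_apply, projIcc_of_mem hδ hs]
  have hφH : ∀ t ∈ Icc 0 δ, integrand hδ F u t = F t (∫ τ in 0..t, integrand hδ F u τ) :=
    fun t ht => by rw [integrand_of_mem hδ ht, hHu t ht]
  refine ⟨fun s => ∫ t in 0..s, integrand hδ F u t, ?_, fun s hs => ⟨?_, ?_⟩⟩
  · rw [contDiff_one_iff_deriv, funext (hφ.deriv_integral _ 0)]
    exact ⟨fun s => (hφ.integral_hasStrictDerivAt 0 s).hasDerivAt.differentiableAt, hφ⟩
  · exact hφH s hs ▸ (hφ.integral_hasStrictDerivAt 0 s).hasDerivAt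
  · refine integral_congr fun t ht => hφH t ?_
    rw [uIcc_of_le hs.1] at ht
    exact ⟨ht.1, ht.2.trans hs.2⟩

end Volterra

noncomputable def halfClamp (I τ x : ℝ) : ℝ := max 0 (min x (I * τ / 2))

noncomputable def barrierField (f : ℝ → ℝ) (I τ x : ℝ) : ℝ := f τ / (I * τ - halfClamp I τ x)

section Barrier

variable {f : ℝ → ℝ} {m C I τ x y : ℝ}

theorem halfClamp_eq_self (h0 : 0 ≤ x) (h : x ≤ I * τ / 2) : halfClamp I τ x = x := by
  simp [halfClamp, h0, h]

theorem abs_halfClamp_sub_le : |halfClamp I τ x - halfClamp I τ y| ≤ |x - y| := by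
  unfold halfClamp
  rw [max_comm 0, max_comm 0]
  refine (abs_max_sub_max_le_abs _ _ _).trans ?_
  simpa using abs_min_sub_min_le_max x (I * τ / 2) y (I * τ / 2)

theorem continuous_halfClamp : Continuous fun p : ℝ × ℝ => halfClamp I p.1 p.2 := by
  unfold halfClamp; fun_prop

theorem half_le_sub_halfClamp (hI : 0 < I) (hτ : 0 ≤ τ) : I * τ / 2 ≤ I * τ - halfClamp I τ x := by
  have : halfClamp I τ x ≤ I * τ / 2 := max_le (by positivity) (min_le_right _ _)
  linarith

-- The denominator vanishes at `τ = 0`, where Lean's `x / 0 = 0` convention applies.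
theorem barrierField_zero_left : barrierField f I 0 x = 0 := by
  simp [barrierField, halfClamp]

theorem barrierField_nonneg (hI : 0 < I) (hτ : 0 ≤ τ) (hf : 0 ≤ f τ) :
    0 ≤ barrierField f I τ x :=
  div_nonneg hf ((by positivity : 0 ≤ I * τ / 2).trans (half_le_sub_halfClamp hI hτ))

theorem barrierField_le (hm : 1 < m) (hI : 0 < I) (hτ : 0 ≤ τ) (hf : f τ ∈ Icc 0 (C * τ ^ m)) :
    barrierField f I τ x ≤ 2 * C / I * τ ^ (m - 1) := by
  rcases hτ.eq_or_lt with rfl | hτ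
  · simp [barrierField_zero_left, Real.zero_rpow (by linarith : m - 1 ≠ 0)]
  calc barrierField f I τ x ≤ f τ / (I * τ / 2) :=
        div_le_div_of_nonneg_left hf.1 (by positivity) (half_le_sub_halfClamp hI hτ.le)
    _ ≤ C * τ ^ m / (I * τ / 2) := by gcongr; exact hf.2
    _ = 2 * C / I * τ ^ (m - 1) := by rw [Real.rpow_sub_one hτ.ne']; field_simp

theorem abs_barrierField_sub_le (hI : 0 < I) (hτ : 0 < τ) (hf : f τ ∈ Icc 0 (C * τ ^ m)) :
    |barrierField f I τ x - barrierField f I τ y| ≤ 4 * C / I ^ 2 * τ ^ (m - 2) * |x - y| := by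
  have hx := half_le_sub_halfClamp hI hτ.le (x := x)
  have hy := half_le_sub_halfClamp hI hτ.le (x := y)
  have h2 : 0 < I * τ / 2 := by positivity
  have hdiff : barrierField f I τ x - barrierField f I τ y = f τ * (halfClamp I τ x -
      halfClamp I τ y) / ((I * τ - halfClamp I τ x) * (I * τ - halfClamp I τ y)) := by
    unfold barrierField
    field_simp [(h2.trans_le hx).ne', (h2.trans_le hy).ne']
    ring
  rw [hdiff, abs_div, abs_mul, abs_of_nonneg hf.1,
    abs_of_pos (mul_pos (h2.trans_le hx) (h2.trans_le hy))]
  calc _ ≤ C * τ ^ m * |x - y| / ((I * τ / 2) * (I * τ / 2)) :=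
        div_le_div₀ (by have := hf.1.trans hf.2; positivity)
          (mul_le_mul hf.2 abs_halfClamp_sub_le (abs_nonneg _) (hf.1.trans hf.2))
          (by positivity) (mul_le_mul hx hy h2.le (h2.le.trans hx))
    _ = 4 * C / I ^ 2 * τ ^ (m - 2) * |x - y| := by
        rw [Real.rpow_sub hτ, Real.rpow_two]; field_simp; ring

theorem continuousOn_barrierField (hm : 1 < m) (hI : 0 < I) {δ : ℝ} (hf : ContinuousOn f (Icc 0 δ))
    (hfC : ∀ τ ∈ Icc 0 δ, f τ ∈ Icc 0 (C * τ ^ m)) :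
    ContinuousOn (Function.uncurry (barrierField f I)) (Icc 0 δ ×ˢ univ) := by
  rintro ⟨τ, x⟩ ⟨hτ, -⟩
  rcases hτ.1.eq_or_lt with rfl | hτ0
  · have hbound : Tendsto (fun p : ℝ × ℝ => 2 * C / I * p.1 ^ (m - 1)) (𝓝 (0, x)) (𝓝 0) := by
      simpa using ((tendsto_rpow_nhds_zero (sub_pos.2 hm)).comp
        (continuous_fst.tendsto (0, x))).const_mul (2 * C / I)
    simp only [ContinuousWithinAt, Function.uncurry_apply_pair, barrierField_zero_left]
    exact squeeze_zero'
      (eventually_nhdsWithin_of_forall fun p hp => barrierField_nonneg hI hp.1.1 (hfC _ hp.1).1)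
      (eventually_nhdsWithin_of_forall fun p hp => barrierField_le hm hI hp.1.1 (hfC _ hp.1))
      (hbound.mono_left nhdsWithin_le_nhds)
  · have hden : I * τ - halfClamp I τ x ≠ 0 :=
      ((by positivity : 0 < I * τ / 2).trans_le (half_le_sub_halfClamp hI hτ0.le)).ne'
    exact ((hf.comp continuousOn_fst fun p hp => hp.1) (τ, x) (mk_mem_prod hτ (mem_univ x))).div
      (((continuous_const.mul continuous_fst).sub continuous_halfClamp).continuousWithinAt) hden

end Barrier

theorem integral_barrierField_mem_Icc {f H : ℝ → ℝ} {m C I δ s : ℝ} (hm : 1 < m) (hI : 0 < I)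
    (hf : ContinuousOn f (Icc 0 δ)) (hfC : ∀ τ ∈ Icc 0 δ, f τ ∈ Icc 0 (C * τ ^ m))
    (hH : Continuous H) (hs : s ∈ Icc 0 δ) :
    ∫ t in 0..s, barrierField f I t (H t) ∈ Icc 0 (2 * C / (I * m) * s ^ m) := by
  have hsub : ∀ t ∈ Icc 0 s, t ∈ Icc 0 δ := fun t ht => ⟨ht.1, ht.2.trans hs.2⟩
  have hint : IntervalIntegrable (fun t => barrierField f I t (H t)) volume 0 s := by
    refine ContinuousOn.intervalIntegrable ?_
    rw [uIcc_of_le hs.1]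
    exact (continuousOn_barrierField hm hI hf hfC).comp
      (continuousOn_id.prodMk hH.continuousOn) fun t ht => mk_mem_prod (hsub t ht) (mem_univ _)
  refine ⟨integral_nonneg hs.1 fun t ht => barrierField_nonneg hI ht.1 (hfC t (hsub t ht)).1, ?_⟩
  calc ∫ t in 0..s, barrierField f I t (H t) ≤ ∫ t in 0..s, 2 * C / I * t ^ (m - 1) :=
        integral_mono_on hs.1 hint
          ((intervalIntegral.intervalIntegrable_rpow' (by linarith)).const_mul _)
          fun t ht => barrierField_le hm hI ht.1 (hfC t (hsub t ht))
    _ = 2 * C / (I * m) * s ^ m := by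
        rw [intervalIntegral.integral_const_mul, integral_rpow_zero_left (by linarith),
          sub_add_cancel]
        field_simp

theorem exists_hasDerivAt_div_sub {f : ℝ → ℝ} {m C I δ : ℝ} (hm : 1 < m) (hI : 0 < I)
    (hC : 0 ≤ C) (hδ : 0 ≤ δ) (hf : ContinuousOn f (Icc 0 δ))
    (hfC : ∀ τ ∈ Icc 0 δ, f τ ∈ Icc 0 (C * τ ^ m)) (hδm : 4 * C * δ ^ (m - 1) < (m - 1) * I ^ 2) :
    ∃ H : ℝ → ℝ, ContDiff ℝ 1 H ∧ H 0 = 0 ∧ ∀ s ∈ Icc 0 δ, HasDerivAt H (f s / (I * s - H s)) s ∧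
      0 ≤ H s ∧ H s ≤ 2 * C / (I * m) * s ^ m ∧ H s ≤ I * s / 2 := by
  have hL1 : ∫ t in 0..δ, 4 * C / I ^ 2 * t ^ (m - 2) < 1 := by
    rw [intervalIntegral.integral_const_mul, integral_rpow_zero_left (by linarith),
      show m - 2 + 1 = m - 1 by ring, div_mul_div_comm,
      div_lt_one (mul_pos (pow_pos hI 2) (sub_pos.2 hm))]
    linarith
  obtain ⟨H, hHC, hH⟩ := Volterra.exists_contDiff_hasDerivAt hδ
    (continuousOn_barrierField hm hI hf hfC)
    (fun t ht _ _ => abs_barrierField_sub_le hI ht.1 (hfC t (Ioc_subset_Icc_self ht)))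
    ((intervalIntegral.intervalIntegrable_rpow' (by linarith)).const_mul _) hL1
  refine ⟨H, hHC, (hH 0 (left_mem_Icc.2 hδ)).2.trans integral_same, fun s hs => ?_⟩
  obtain ⟨hHd, hHint⟩ := hH s hs
  obtain ⟨h0, hle⟩ : H s ∈ Icc 0 (2 * C / (I * m) * s ^ m) :=
    hHint ▸ integral_barrierField_mem_Icc hm hI hf hfC hHC.continuous hs
  have hhalf : H s ≤ I * s / 2 := by
    have hsδ : s ^ (m - 1) ≤ δ ^ (m - 1) := Real.rpow_le_rpow hs.1 hs.2 (by linarith)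
    refine hle.trans ?_
    rw [rpow_eq_rpow_sub_one_mul hs.1 (by linarith), div_mul_eq_mul_div,
      div_le_div_iff₀ (by nlinarith) two_pos]
    nlinarith [mul_le_mul_of_nonneg_left hsδ hC, hs.1, hδm]
  refine ⟨?_, h0, hle, hhalf⟩
  rwa [barrierField, halfClamp_eq_self h0 hhalf] at hHd

theorem kpp_reaction_mem_Icc {m s : ℝ} (hm : 0 ≤ m) (hs : s ∈ Icc (0:ℝ) 1) :
    m * s ^ m * (1 - s) ∈ Icc 0 (m * s ^ m) := by
  have h := mul_nonneg hm (Real.rpow_nonneg hs.1 m)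
  exact ⟨mul_nonneg h (sub_nonneg.2 hs.2), mul_le_of_le_one_right h (by linarith [hs.1])⟩

theorem abs_sub_sq_sub_sq_le_rpow {I K m s h : ℝ} (hs : 0 ≤ s) (hm : m ≠ 0) (h0 : 0 ≤ h)
    (h2 : h ≤ 2 * (I * s)) (hK : h ≤ K * s ^ m) :
    |(I * s - h) ^ 2 - I ^ 2 * s ^ 2| ≤ 2 * I * K * s ^ (m - 1) * s ^ 2 := by
  have hIs : 0 ≤ I * s := by linarith
  calc |(I * s - h) ^ 2 - I ^ 2 * s ^ 2| ≤ 2 * (I * s) * h := by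
        rw [abs_le]; constructor <;> nlinarith
    _ ≤ 2 * (I * s) * (K * s ^ m) := by gcongr
    _ = 2 * I * K * s ^ (m - 1) * s ^ 2 := by rw [rpow_eq_rpow_sub_one_mul hs hm]; ring

theorem hasDerivAt_sq_sub_of_hasDerivAt_div {H : ℝ → ℝ} {I s g : ℝ}
    (hH : HasDerivAt H (g / (I * s - H s)) s) (hpos : 0 < I * s - H s) :
    HasDerivAt (fun x => (I * x - H x) ^ 2) (2 * I * √((I * s - H s) ^ 2) - 2 * g) s := by
  refine ((((hasDerivAt_id s).const_mul I).sub hH).pow 2).congr_deriv ?_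
  rw [Real.sqrt_sq hpos.le]
  field_simp
  simp
  ring

/-- existence of the maximal solution `ρ₀` of the singular problem
`ρ₀' = 2I√ρ₀ - 2f(s)`, `ρ₀(0) = 0`, with `f(s) = ms^m(1-s)`, positive on `(0,δ)`,
satisfying `ρ₀(s) = I²s² + o(s²)` as `s → 0⁺`, and `ρ₀(s) ≥ I²s²/2` near `0`. -/
theorem singular_ODE_lower_barrier
    (m Iv : ℝ) (hm : 1 < m) (hI : 0 < Iv) :
    ∃ δ : ℝ, δ ∈ Set.Ioc (0:ℝ) 1 ∧
      ∃ ρ₀ : ℝ → ℝ,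
        ContDiffOn ℝ 1 ρ₀ (Set.Ico 0 δ) ∧ ρ₀ 0 = 0 ∧
        (∀ s ∈ Set.Ico (0:ℝ) δ, 0 ≤ ρ₀ s) ∧
        (∀ s ∈ Set.Ioo (0:ℝ) δ, 0 < ρ₀ s ∧
          HasDerivAt ρ₀ (2*Iv*Real.sqrt (ρ₀ s) - 2*(m*s^m*(1-s))) s) ∧
        ((fun s => ρ₀ s - Iv^2 * s^2) =o[𝓝[>] (0:ℝ)] fun s => s^2) ∧
        ∃ s₀ ∈ Set.Ioo (0:ℝ) δ, ∀ s ∈ Set.Ioo (0:ℝ) s₀, Iv^2 * s^2 / 2 ≤ ρ₀ s := by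
  have hp : 0 < m - 1 := sub_pos.2 hm
  set c := 2 * Iv * (2 * m / (Iv * m))
  obtain ⟨δ, hδ, hδm, hδc⟩ : ∃ δ ∈ Ioc (0:ℝ) 1,
      4 * m * δ ^ (m - 1) < (m - 1) * Iv ^ 2 ∧ c * δ ^ (m - 1) < Iv ^ 2 / 2 :=
    ((eventually_mem_set.2 (Ioc_mem_nhdsGT one_pos)).and ((eventually_mul_rpow_lt hp
      (by positivity) _).and (eventually_mul_rpow_lt hp (by positivity) _))).exists
  obtain ⟨H, hHC, hH0, hH⟩ := exists_hasDerivAt_div_sub (f := fun s => m * s ^ m * (1 - s)) (C := m)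
    hm hI (by linarith) hδ.1.le
    ((continuous_const.mul (Real.continuous_rpow_const (by linarith))).mul
      (continuous_const.sub continuous_id)).continuousOn
    (fun s hs => kpp_reaction_mem_Icc (by linarith) ⟨hs.1, hs.2.trans hδ.2⟩) hδm
  have hdev : ∀ s ∈ Ioo 0 δ, |(Iv * s - H s) ^ 2 - Iv ^ 2 * s ^ 2| ≤ c * s ^ (m - 1) * s ^ 2 :=
    fun s hs => by
      obtain ⟨-, h0, hK, hhalf⟩ := hH s (Ioo_subset_Icc_self hs)
      exact abs_sub_sq_sub_sq_le_rpow hs.1.le (by linarith) h0 (by nlinarith [hs.1]) hK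
  refine ⟨δ, hδ, fun s => (Iv * s - H s) ^ 2,
    (((contDiff_const.mul contDiff_id).sub hHC).pow 2).contDiffOn, by simp [hH0],
    fun s _ => sq_nonneg _, fun s hs => ?_, isLittleO_of_abs_le_rpow_mul (c := c) hp ?_,
    δ / 2, ⟨by linarith [hδ.1], by linarith [hδ.1]⟩, fun s hs => ?_⟩
  · obtain ⟨hd, -, -, hhalf⟩ := hH s (Ioo_subset_Icc_self hs)
    have hpos : 0 < Iv * s - H s := by nlinarith [hs.1]
    exact ⟨pow_pos hpos 2, hasDerivAt_sq_sub_of_hasDerivAt_div hd hpos⟩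
  · filter_upwards [Ioo_mem_nhdsGT hδ.1] with s hs
    simpa only [abs_of_nonneg (sq_nonneg s)] using hdev s hs
  · have hsδ : s < δ := by linarith [hs.1, hs.2]
    have hrpow : s ^ (m - 1) ≤ δ ^ (m - 1) := Real.rpow_le_rpow hs.1.le hsδ.le hp.le
    have := abs_le.1 (hdev s ⟨hs.1, hsδ⟩)
    nlinarith [mul_le_mul_of_nonneg_left hrpow (by positivity : 0 ≤ c), sq_nonneg s]
end
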